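/- arXiv:2510.21514 — 3 statements merged into one kernel-verified Lean document; each statement's English description precedes it below -/
import Mathlib

section
/- If A and B are history-deterministic labelled transition systems with equal trace languages L_T(A) = L_T(B), then A and B are in two-sided simulation relation. -/
/-- A labelled transition system over alphabet `A`. -/
structure LTS (A : Type) where
  Conf : Type
  init : Conf
  Step : Conf → A → Conf → Prop

/-- `Reads L c w` : there is a path from configuration `c` reading the word `w`. -/
inductive LTS.Reads {A : Type} (L : LTS A) : L.Conf → List A → Prop
  | nil (c : L.Conf) : LTS.Reads L c []
  | cons {c c' : L.Conf} {a : A} {w : List A} :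
      L.Step c a c' → LTS.Reads L c' w → LTS.Reads L c (a :: w)

/-- The trace language of an LTS: all words readable from the initial configuration. -/
def LTS.TraceLang {A : Type} (L : LTS A) : Set (List A) :=
  {w | L.Reads L.init w}

/-- `Simulates P Q` : `P` simulates `Q` (Duplicator plays in `P`, Spoiler in `Q`),
via a simulation relation containing the pair of initial configurations. -/
def Simulates {A : Type} (P Q : LTS A) : Prop :=
  ∃ S : P.Conf → Q.Conf → Prop, S P.init Q.init ∧
    ∀ cP cQ, S cP cQ → ∀ a cQ', Q.Step cQ a cQ' →
      ∃ cP', P.Step cP a cP' ∧ S cP' cQ'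

/-- Two-sided simulation: each LTS simulates the other. -/
def TwoSidedSim {A : Type} (P Q : LTS A) : Prop :=
  Simulates P Q ∧ Simulates Q P

/-- The run induced by a resolver `r` (a function of the history of the run,
the current configuration and the next letter) is valid along `w`:
every transition chosen by the resolver is enabled. -/
inductive ResolverRun {A : Type} (L : LTS A)
    (r : List (L.Conf × A) → L.Conf → A → L.Conf) :
    List (L.Conf × A) → L.Conf → List A → Prop
  | nil (h : List (L.Conf × A)) (c : L.Conf) : ResolverRun L r h c []
  | cons {h : List (L.Conf × A)} {c : L.Conf} {a : A} {w : List A} :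
      L.Step c a (r h c a) →
      ResolverRun L r (h ++ [(c, a)]) (r h c a) w →
      ResolverRun L r h c (a :: w)

/-- `r` is a resolver for `L`: following `r` from the initial configuration
produces a valid run over every word of the trace language. -/
def IsResolver {A : Type} (L : LTS A)
    (r : List (L.Conf × A) → L.Conf → A → L.Conf) : Prop :=
  ∀ w ∈ L.TraceLang, ResolverRun L r [] L.init w

/-- An LTS is history-deterministic if it admits a resolver. -/
def HistoryDeterministic {A : Type} (L : LTS A) : Prop :=
  ∃ r, IsResolver L r

/-! Duplicator plays in `P` by following its resolver against Spoiler's moves in `Q`. The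
invariant is that from the current history and configuration of `P`, the resolver's run is valid
on every word still readable in `Q`; it holds initially because `L_T(Q) ⊆ L_T(P)`, and it is
preserved because a word readable after Spoiler's `a`-move extends to one readable before it. -/

theorem ResolverRun.cons_inv {A : Type} {L : LTS A}
    {r : List (L.Conf × A) → L.Conf → A → L.Conf} {h : List (L.Conf × A)} {c : L.Conf} {a : A}
    {w : List A} (hrun : ResolverRun L r h c (a :: w)) :
    L.Step c a (r h c a) ∧ ResolverRun L r (h ++ [(c, a)]) (r h c a) w := by
  cases hrun with
  | cons hstep hrest => exact ⟨hstep, hrest⟩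

theorem Simulates.of_historyDeterministic {A : Type} {P Q : LTS A}
    (hP : HistoryDeterministic P) (hsub : Q.TraceLang ⊆ P.TraceLang) : Simulates P Q := by
  obtain ⟨r, hr⟩ := hP
  refine ⟨fun cP cQ => ∃ h, ∀ w, Q.Reads cQ w → ResolverRun P r h cP w,
    ⟨[], fun w hw => hr w (hsub hw)⟩, ?_⟩
  rintro cP cQ ⟨h, hrun⟩ a cQ' hstep
  exact ⟨r h cP a, (hrun [a] (.cons hstep (.nil cQ'))).cons_inv.1,
    h ++ [(cP, a)], fun w hw => (hrun (a :: w) (.cons hstep hw)).cons_inv.2⟩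

/-- If `A` and `B` are history-deterministic LTSs with equal trace languages,
then they are in two-sided simulation relation. -/
theorem hd_traceLang_eq_twoSidedSim {A : Type} (P Q : LTS A)
    (hP : HistoryDeterministic P) (hQ : HistoryDeterministic Q)
    (h : P.TraceLang = Q.TraceLang) : TwoSidedSim P Q :=
  ⟨.of_historyDeterministic hP h.ge, .of_historyDeterministic hQ h.le⟩
end

section
/- For any equivalence-like relation R on LTSs such that (i) two-sided simulation implies R and (ii) R implies trace-language equality, and for any history-deterministic LTSs A and B: (A,B) ∈ R if and only if L_T(A) = L_T(B). -/
/-!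
A resolver for `P` only needs the word read so far, so it lets `P` shadow any run of `Q` as long as
every trace of `Q` is a trace of `P`: the simulation relates the end of a run of `Q` over `w` to the
configuration the resolver of `P` reaches over `w`. Hence history-deterministic systems with equal
trace languages are in two-sided simulation, and `R` is squeezed to trace-language equality.
-/

namespace LTS

variable {A : Type} {L : LTS A}

inductive ReadsTo (L : LTS A) : L.Conf → List A → L.Conf → Prop
  | nil (c : L.Conf) : ReadsTo L c [] c
  | cons {c c' c'' : L.Conf} {a : A} {w : List A} :
      L.Step c a c' → ReadsTo L c' w c'' → ReadsTo L c (a :: w) c''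

theorem ReadsTo.reads {c c' : L.Conf} {w : List A} (h : L.ReadsTo c w c') : L.Reads c w := by
  induction h with
  | nil => exact .nil _
  | cons s _ ih => exact .cons s ih

theorem ReadsTo.snoc {c c' c'' : L.Conf} {w : List A} {a : A}
    (h : L.ReadsTo c w c') (s : L.Step c' a c'') : L.ReadsTo c (w ++ [a]) c'' := by
  induction h with
  | nil => exact .cons s (.nil _)
  | cons s' _ ih => exact .cons s' (ih s)

end LTS

section Resolver

variable {A : Type} {L : LTS A} (r : List (L.Conf × A) → L.Conf → A → L.Conf)

def resolverState : List (L.Conf × A) → L.Conf → List A → List (L.Conf × A) × L.Conf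
  | h, c, [] => (h, c)
  | h, c, a :: w => resolverState (h ++ [(c, a)]) (r h c a) w

variable {r}

theorem ResolverRun.step_resolverState_snoc {a : A} :
    ∀ {w : List A} {h : List (L.Conf × A)} {c : L.Conf}, ResolverRun L r h c (w ++ [a]) →
      L.Step (resolverState r h c w).2 a (resolverState r h c (w ++ [a])).2
  | [], _, _, .cons s _ => s
  | _ :: w, _, _, .cons _ rest => step_resolverState_snoc (w := w) rest

end Resolver

theorem Simulates.of_isResolver {A : Type} {P Q : LTS A}
    {r : List (P.Conf × A) → P.Conf → A → P.Conf}
    (hr : IsResolver P r) (hsub : Q.TraceLang ⊆ P.TraceLang) : Simulates P Q := by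
  refine ⟨fun cP cQ => ∃ w, Q.ReadsTo Q.init w cQ ∧ cP = (resolverState r [] P.init w).2,
    ⟨[], .nil _, rfl⟩, ?_⟩
  rintro _ cQ ⟨w, hw, rfl⟩ a cQ' hstep
  have hwa : Q.ReadsTo Q.init (w ++ [a]) cQ' := hw.snoc hstep
  exact ⟨_, (hr _ (hsub hwa.reads)).step_resolverState_snoc, w ++ [a], hwa, rfl⟩

theorem TwoSidedSim.of_traceLang_eq {A : Type} {P Q : LTS A}
    (hP : HistoryDeterministic P) (hQ : HistoryDeterministic Q)
    (h : P.TraceLang = Q.TraceLang) : TwoSidedSim P Q :=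
  ⟨Simulates.of_isResolver hP.choose_spec h.ge, Simulates.of_isResolver hQ.choose_spec h.le⟩

/-- For any relation `R` on LTSs lying between two-sided simulation and
trace-language equality, and any history-deterministic LTSs `A` and `B`:
`(A, B) ∈ R` iff their trace languages are equal. -/
theorem relation_iff_traceLang_eq {A : Type} (R : LTS A → LTS A → Prop)
    (hsim : ∀ P Q : LTS A, TwoSidedSim P Q → R P Q)
    (hlang : ∀ P Q : LTS A, P.TraceLang ≠ Q.TraceLang → ¬ R P Q)
    (P Q : LTS A)
    (hP : HistoryDeterministic P) (hQ : HistoryDeterministic Q) :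
    R P Q ↔ P.TraceLang = Q.TraceLang :=
  ⟨fun hR => of_not_not fun hne => hlang P Q hne hR,
    fun h => hsim P Q (.of_traceLang_eq hP hQ h)⟩
end

section
/- If L_T(A) = L_T(B) and B is history-deterministic, then B simulates A. -/
/-- Reachability reading a word, tracking the endpoint. -/
inductive LTS.ReadsTo_s17 {A : Type} (L : LTS A) : L.Conf → List A → L.Conf → Prop
  | nil (c : L.Conf) : LTS.ReadsTo_s17 L c [] c
  | cons {c c' c'' : L.Conf} {a : A} {w : List A} :
      L.Step c a c' → LTS.ReadsTo_s17 L c' w c'' → LTS.ReadsTo_s17 L c (a :: w) c''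

theorem readsTo_reads {A : Type} {L : LTS A} {c : L.Conf} {w : List A} {c' : L.Conf}
    (hr : L.ReadsTo_s17 c w c') : L.Reads c w := by
  induction hr with
  | nil c => exact LTS.Reads.nil c
  | cons s _ ih => exact LTS.Reads.cons s ih

/-- The (history, configuration) reached by following resolver `r`. -/
def runSt {A : Type} (L : LTS A) (r : List (L.Conf × A) → L.Conf → A → L.Conf) :
    List (L.Conf × A) → L.Conf → List A → List (L.Conf × A) × L.Conf
  | h, c, [] => (h, c)
  | h, c, a :: w => runSt L r (h ++ [(c, a)]) (r h c a) w

theorem readsTo_snoc {A : Type} {L : LTS A} {c c' c'' : L.Conf} {w : List A} {a : A}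
    (hr : L.ReadsTo_s17 c w c') (hs : L.Step c' a c'') : L.ReadsTo_s17 c (w ++ [a]) c'' := by
  induction hr with
  | nil c => exact LTS.ReadsTo_s17.cons hs (LTS.ReadsTo_s17.nil _)
  | cons s _ ih => exact LTS.ReadsTo_s17.cons s (ih hs)

theorem runSt_append {A : Type} (L : LTS A) (r : List (L.Conf × A) → L.Conf → A → L.Conf)
    (w : List A) (a : A) : ∀ h c,
    runSt L r h c (w ++ [a]) =
      ((runSt L r h c w).1 ++ [((runSt L r h c w).2, a)],
        r (runSt L r h c w).1 (runSt L r h c w).2 a) := by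
  induction w with
  | nil => intro h c; rfl
  | cons b w ih => intro h c; simpa [runSt] using ih (h ++ [(c, b)]) (r h c b)

theorem resolverRun_last_step {A : Type} (L : LTS A)
    (r : List (L.Conf × A) → L.Conf → A → L.Conf) (w : List A) (a : A) : ∀ h c,
    ResolverRun L r h c (w ++ [a]) →
      L.Step (runSt L r h c w).2 a (r (runSt L r h c w).1 (runSt L r h c w).2 a) := by
  induction w with
  | nil =>
    intro h c hrun
    cases hrun with
    | cons s _ => exact s
  | cons b w ih =>
    intro h c hrun
    cases hrun with
    | cons s hrest => simpa [runSt] using ih (h ++ [(c, b)]) (r h c b) hrest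

/-- If `P` and `Q` have equal trace languages and `Q` is history-deterministic,
then `Q` simulates `P` (Duplicator plays according to the resolver). -/
theorem hd_traceLang_eq_simulates {A : Type} (P Q : LTS A)
    (h : P.TraceLang = Q.TraceLang) (hQ : HistoryDeterministic Q) :
    Simulates Q P := by
  obtain ⟨r, hr⟩ := hQ
  refine ⟨fun cQ cP => ∃ w, P.ReadsTo_s17 P.init w cP ∧ (runSt Q r [] Q.init w).2 = cQ,
    ⟨[], LTS.ReadsTo_s17.nil _, rfl⟩, ?_⟩
  rintro cQ cP ⟨w, hwP, hwQ⟩ a cP' hstep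
  -- w ++ [a] is reachable in P
  have hreach : P.ReadsTo_s17 P.init (w ++ [a]) cP' := readsTo_snoc hwP hstep
  have hlang : (w ++ [a]) ∈ Q.TraceLang := h ▸ readsTo_reads hreach
  have hrun := hr _ hlang
  have hQstep := resolverRun_last_step Q r w a [] Q.init hrun
  rw [hwQ] at hQstep
  refine ⟨_, hQstep, w ++ [a], hreach, ?_⟩
  rw [runSt_append, hwQ]
end
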